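/- Let δ: L^(2) → M be a symbolic ultrametric with unique least-resolved (discriminating) tree (T_δ, t_δ). Then a rooted phylogenetic tree T with leaf set L admits a vertex labeling t: V⁰(T) → M such that (T,t) explains δ if and only if T is a refinement of T_δ; moreover, in that case the labeling t is uniquely determined by T and δ. -/
import Mathlib


/-- A rooted phylogenetic tree with leaf set `L`: a finite vertex type `V`,
a root, a parent map (the root is its own parent), every vertex reaches the
root by iterating `parent`, the leaves are exactly the vertices without
children and are in bijection with `L`, and every inner vertex has at least
two children. -/
structure PhyloTree (L : Type) : Type 1 where
  V : Type
  fintypeV : Fintype V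
  root : V
  parent : V → V
  leaf : L → V
  parent_root : parent root = root
  reach : ∀ v : V, ∃ n : ℕ, parent^[n] v = root
  leaf_inj : Function.Injective leaf
  leaf_iff : ∀ v : V, (∀ u : V, parent u = v → u = v) ↔ ∃ x : L, leaf x = v
  phylo : ∀ v : V, (¬ ∃ x : L, leaf x = v) →
      ∃ u u' : V, u ≠ u' ∧ parent u = v ∧ parent u' = v ∧ u ≠ v ∧ u' ≠ v

namespace PhyloTree

variable {L : Type} (T : PhyloTree L)

/-- `v` is an ancestor (or equal) of `w`. -/
def anc (v w : T.V) : Prop := ∃ n : ℕ, T.parent^[n] w = v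

def isLeaf (v : T.V) : Prop := ∃ x : L, T.leaf x = v

/-- The cluster `L(T(v))`: the set of leaves below `v`. -/
def cluster (v : T.V) : Set L := {x : L | T.anc v (T.leaf x)}

/-- The cluster system `H(T)`. -/
def clusters : Set (Set L) := Set.range T.cluster

/-- `w` is the last common ancestor of the leaves `x` and `y`. -/
def isLCA (x y : L) (w : T.V) : Prop :=
  T.anc w (T.leaf x) ∧ T.anc w (T.leaf y) ∧
    ∀ u : T.V, T.anc u (T.leaf x) → T.anc u (T.leaf y) → T.anc u w

/-- `u` is a child of `v`. -/
def childOf (u v : T.V) : Prop := T.parent u = v ∧ u ≠ v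

/-- The edge `{parent u, u}` (encoded by its lower endpoint `u`) is an inner edge. -/
def innerEdge (u : T.V) : Prop := T.parent u ≠ u ∧ ¬ T.isLeaf u

/-- The edge `{parent u, u}` lies on the path from the vertex `w` down to the leaf `y`. -/
def onPath (w : T.V) (y : L) (u : T.V) : Prop :=
  T.anc w u ∧ u ≠ w ∧ T.anc u (T.leaf y)

/-- The vertex-labeled tree `(T,t)` explains `δ`. -/
def ExplainsDelta {M : Type} (t : T.V → M) (δ : L → L → M) : Prop :=
  ∀ x y : L, x ≠ y → ∀ w : T.V, T.isLCA x y w → t w = δ x y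

/-- The edge-labeled tree `(T,λ)` explains `ε`; edge labels are encoded on the
lower endpoint of each edge. -/
def ExplainsEps {N : Type} (lam : T.V → Finset N) (ε : L → L → Finset N) : Prop :=
  ∀ x y : L, x ≠ y → ∀ w : T.V, T.isLCA x y w →
    ∀ k : N, k ∈ ε x y ↔ ∃ u : T.V, T.onPath w y u ∧ k ∈ lam u

/-- The vertex labeling is discriminating: the endpoints of every inner edge
carry distinct labels. -/
def Discriminating {M : Type} (t : T.V → M) : Prop :=
  ∀ u : T.V, T.innerEdge u → t u ≠ t (T.parent u)

/-- Total number of labels over all edges, `Σ_{e ∈ E(T)} |λ(e)|`. -/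
noncomputable def labelSum {N : Type} (lam : T.V → Finset N) : ℕ :=
  letI := T.fintypeV
  letI := Classical.decEq T.V
  ∑ v : T.V, if T.parent v = v then 0 else (lam v).card

/-- Condition (C): every inner vertex has a child joined by an empty-labeled edge. -/
def CondC {N : Type} (lam : T.V → Finset N) : Prop :=
  ∀ v : T.V, ¬ T.isLeaf v → ∃ u : T.V, T.childOf u v ∧ lam u = ∅

/-- Condition (C1): if `t(v) ∈ M₀` then all edges from `v` to its children are empty. -/
def CondC1 {M N : Type} (t : T.V → M) (lam : T.V → Finset N) (M0 : Set M) : Prop :=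
  ∀ v u : T.V, T.childOf u v → t v ∈ M0 → lam u = ∅

/-- Condition (C2): at every vertex, at most one edge to a child is nonempty. -/
def CondC2 {N : Type} (lam : T.V → Finset N) : Prop :=
  ∀ v u u' : T.V, T.childOf u v → T.childOf u' v → lam u ≠ ∅ → lam u' ≠ ∅ → u = u'

/-- `(T1,λ1) ≤ (T2,λ2)`: the edge-labeled tree `(T2,λ2)` refines `(T1,λ1)`. -/
def LeLabeled {N : Type} (T1 : PhyloTree L) (lam1 : T1.V → Finset N)
    (T2 : PhyloTree L) (lam2 : T2.V → Finset N) : Prop :=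
  T1.clusters ⊆ T2.clusters ∧
    ∀ (v1 : T1.V) (v2 : T2.V), T1.parent v1 ≠ v1 → T2.parent v2 ≠ v2 →
      T1.cluster v1 = T2.cluster v2 → lam1 v1 ⊆ lam2 v2

/-- `φ` witnesses that `T'` is obtained from `T` by contracting the inner edge
`{parent u, u}`. -/
def IsContractionMap (T : PhyloTree L) (u : T.V) (T' : PhyloTree L)
    (φ : T.V → T'.V) : Prop :=
  T.innerEdge u ∧ Function.Surjective φ ∧ φ u = φ (T.parent u) ∧
    (∀ a b : T.V, φ a = φ b →
      a = b ∨ (a = u ∧ b = T.parent u) ∨ (b = u ∧ a = T.parent u)) ∧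
    (∀ v : T.V, v ≠ u → T'.parent (φ v) = φ (T.parent v)) ∧
    (∀ x : L, φ (T.leaf x) = T'.leaf x) ∧ φ T.root = T'.root

/-- `T'` is obtained from `T` by contracting the inner edge `{parent u, u}`. -/
def ContractEdge (T : PhyloTree L) (u : T.V) (T' : PhyloTree L) : Prop :=
  ∃ φ : T.V → T'.V, IsContractionMap T u T' φ

/-- Isomorphism of rooted trees on the same leaf set. -/
def Isomorphic (T1 T2 : PhyloTree L) : Prop :=
  ∃ φ : T1.V ≃ T2.V, (∀ v : T1.V, φ (T1.parent v) = T2.parent (φ v)) ∧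
    ∀ x : L, φ (T1.leaf x) = T2.leaf x

def IsSymbolicUltrametric {M : Type} (δ : L → L → M) : Prop :=
  ∃ (T : PhyloTree L) (t : T.V → M), T.ExplainsDelta t δ

def IsFitchMap {N : Type} (ε : L → L → Finset N) : Prop :=
  ∃ (T : PhyloTree L) (lam : T.V → Finset N), T.ExplainsEps lam ε

def TreeLike {M N : Type} (δ : L → L → M) (ε : L → L → Finset N) : Prop :=
  ∃ (T : PhyloTree L) (t : T.V → M) (lam : T.V → Finset N),
    T.ExplainsDelta t δ ∧ T.ExplainsEps lam ε

def MTreeLike {M N : Type} (δ : L → L → M) (ε : L → L → Finset N) (M0 : Set M) : Prop :=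
  ∃ (T : PhyloTree L) (t : T.V → M) (lam : T.V → Finset N),
    T.ExplainsDelta t δ ∧ T.ExplainsEps lam ε ∧ T.CondC lam ∧ T.CondC1 t lam M0

end PhyloTree

/-- A hierarchy on `L`. -/
def IsHierarchy {L : Type} (H : Set (Set L)) : Prop :=
  Set.univ ∈ H ∧ (∀ x : L, {x} ∈ H) ∧
    (∀ A ∈ H, ∀ B ∈ H, A ∩ B = A ∨ A ∩ B = B ∨ A ∩ B = (∅ : Set L)) ∧
    (∅ : Set L) ∉ H
namespace PhyloTree

variable {L : Type} (T : PhyloTree L)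

lemma anc_refl' (v : T.V) : T.anc v v := ⟨0, rfl⟩

lemma anc_trans' {u v w : T.V} (h1 : T.anc u v) (h2 : T.anc v w) : T.anc u w := by
  obtain ⟨a, ha⟩ := h1; obtain ⟨b, hb⟩ := h2
  exact ⟨a + b, by rw [Function.iterate_add_apply, hb, ha]⟩

lemma iterate_root' (n : ℕ) : T.parent^[n] T.root = T.root := by
  induction n with
  | zero => rfl
  | succ n ih => rw [Function.iterate_succ_apply, T.parent_root, ih]

lemma eq_root_of_cycle' {v : T.V} {k : ℕ} (hk : k ≠ 0) (h : T.parent^[k] v = v) :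
    v = T.root := by
  obtain ⟨n, hn⟩ := T.reach v
  have hmul : ∀ m : ℕ, T.parent^[m * k] v = v := by
    intro m; induction m with
    | zero => simp
    | succ m ih => rw [Nat.succ_mul, Function.iterate_add_apply, h, ih]
  rcases Nat.eq_zero_or_pos n with h0 | h0
  · rw [h0] at hn; simpa using hn
  · have hge : n ≤ n * k := Nat.le_mul_of_pos_right n (Nat.pos_of_ne_zero hk)
    have h2 : T.parent^[n * k] v = T.root := by
      rw [← Nat.sub_add_cancel hge, Function.iterate_add_apply, hn, iterate_root']
    rw [hmul n] at h2
    exact h2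

lemma anc_antisymm' {v w : T.V} (h1 : T.anc v w) (h2 : T.anc w v) : v = w := by
  obtain ⟨a, ha⟩ := h1; obtain ⟨b, hb⟩ := h2
  rcases Nat.eq_zero_or_pos (a + b) with h0 | h0
  · have ha0 : a = 0 := by omega
    rw [ha0] at ha; simpa using ha.symm
  · have hcyc : T.parent^[a + b] v = v := by
      rw [Function.iterate_add_apply, hb, ha]
    have hv : v = T.root := T.eq_root_of_cycle' (by omega) hcyc
    have hw : w = T.root := by rw [← hb, hv, iterate_root']
    rw [hv, hw]

lemma anc_comparable' {u v x : T.V} (hu : T.anc u x) (hv : T.anc v x) :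
    T.anc u v ∨ T.anc v u := by
  obtain ⟨a, ha⟩ := hu; obtain ⟨b, hb⟩ := hv
  rcases le_total a b with h | h
  · right
    exact ⟨b - a, by rw [← ha, ← Function.iterate_add_apply, Nat.sub_add_cancel h, hb]⟩
  · left
    exact ⟨a - b, by rw [← hb, ← Function.iterate_add_apply, Nat.sub_add_cancel h, ha]⟩

lemma parent_ne_of_ne_root' {v : T.V} (h : v ≠ T.root) : T.parent v ≠ v := by
  intro hp
  exact h (T.eq_root_of_cycle' (k := 1) one_ne_zero (by simpa using hp))

lemma exists_child_between' {w u : T.V} (h : T.anc w u) (hne : u ≠ w) :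
    ∃ c : T.V, T.parent c = w ∧ c ≠ w ∧ T.anc c u := by
  classical
  obtain ⟨n, hn⟩ := h
  have hex : ∃ m, T.parent^[m] u = w := ⟨n, hn⟩
  have hjs : T.parent^[Nat.find hex] u = w := Nat.find_spec hex
  have hj0 : Nat.find hex ≠ 0 := by
    intro h0; rw [h0] at hjs; simp at hjs; exact hne hjs
  refine ⟨T.parent^[Nat.find hex - 1] u, ?_, ?_, ⟨Nat.find hex - 1, rfl⟩⟩
  · have h2 := hjs
    rw [← Nat.sub_add_cancel (Nat.one_le_iff_ne_zero.mpr hj0),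
      Function.iterate_succ_apply'] at h2
    exact h2
  · exact fun hc => Nat.find_min hex (by omega) hc

lemma child_unique' {w c1 c2 x : T.V} (h1 : T.parent c1 = w) (h1' : c1 ≠ w)
    (h2 : T.parent c2 = w) (h2' : c2 ≠ w) (ha1 : T.anc c1 x) (ha2 : T.anc c2 x) :
    c1 = c2 := by
  have key : ∀ a b : T.V, T.parent a = w → a ≠ w → T.parent b = w → T.anc a b → a = b := by
    rintro a b hpa hane hpb ⟨k, hk⟩
    rcases Nat.eq_zero_or_pos k with h0 | h0
    · rw [h0] at hk; simpa using hk.symm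
    · have hk' : T.parent^[k - 1] w = a := by
        rw [← Nat.sub_add_cancel h0, Function.iterate_succ_apply, hpb] at hk
        exact hk
      have hcyc : T.parent^[k] w = w := by
        rw [← Nat.sub_add_cancel h0, Function.iterate_succ_apply', hk', hpa]
      have hwroot : w = T.root := T.eq_root_of_cycle' (by omega) hcyc
      exfalso; apply hane
      rw [← hk', hwroot, iterate_root']
  rcases T.anc_comparable' ha1 ha2 with h | h
  · exact key c1 c2 h1 h1' h2 h
  · exact (key c2 c1 h2 h2' h1 h).symm

lemma exists_leaf_below' (v : T.V) : ∃ x : L, T.anc v (T.leaf x) := by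
  classical
  letI := T.fintypeV
  have H : ∀ n : ℕ, ∀ v : T.V, {u : T.V | T.anc v u}.ncard ≤ n →
      ∃ x, T.anc v (T.leaf x) := by
    intro n
    induction n with
    | zero =>
      intro v hv
      exfalso
      have hmem : v ∈ {u : T.V | T.anc v u} := T.anc_refl' v
      have h0 : {u : T.V | T.anc v u} = ∅ :=
        (Set.ncard_eq_zero (Set.toFinite _)).mp (Nat.le_zero.mp hv)
      rw [h0] at hmem
      exact hmem
    | succ n ih =>
      intro v hv
      by_cases hl : T.isLeaf v
      · obtain ⟨x, hx⟩ := hl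
        exact ⟨x, by rw [hx]; exact T.anc_refl' v⟩
      · obtain ⟨u, u', hne, hu, hu', hnev, hnev'⟩ := T.phylo v hl
        have hanc : T.anc v u := ⟨1, by simpa using hu⟩
        have hss : {a : T.V | T.anc u a} ⊂ {a : T.V | T.anc v a} := by
          refine (Set.ssubset_iff_subset_ne).mpr ⟨fun a ha => T.anc_trans' hanc ha, ?_⟩
          intro he
          have : T.anc u v := by
            have h3 : v ∈ {a : T.V | T.anc u a} := by rw [he]; exact T.anc_refl' v
            exact h3
          exact hnev (T.anc_antisymm' this hanc)
        have hlt : {a : T.V | T.anc u a}.ncard < {a : T.V | T.anc v a}.ncard :=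
          Set.ncard_lt_ncard hss (Set.toFinite _)
        obtain ⟨x, hx⟩ := ih u (by omega)
        exact ⟨x, T.anc_trans' hanc hx⟩
  exact H _ v le_rfl

lemma desc_of_leaf' {x : L} {u : T.V} (h : T.anc (T.leaf x) u) : u = T.leaf x := by
  have key : ∀ n : ℕ, ∀ u : T.V, T.parent^[n] u = T.leaf x → u = T.leaf x := by
    intro n
    induction n with
    | zero => intro u hn; simpa using hn
    | succ n ih =>
      intro u hn
      rw [Function.iterate_succ_apply] at hn
      exact (T.leaf_iff (T.leaf x)).mpr ⟨x, rfl⟩ u (ih (T.parent u) hn)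
  obtain ⟨n, hn⟩ := h
  exact key n u hn

lemma cluster_leaf' (x : L) : T.cluster (T.leaf x) = {x} := by
  ext y
  constructor
  · intro hy
    exact Set.mem_singleton_iff.mpr (T.leaf_inj (T.desc_of_leaf' hy))
  · intro hy
    rw [Set.mem_singleton_iff] at hy
    subst hy
    exact T.anc_refl' _

lemma cluster_root' : T.cluster T.root = Set.univ :=
  Set.eq_univ_of_forall fun x => T.reach _

lemma cluster_mono' {w w' : T.V} (h : T.anc w' w) : T.cluster w ⊆ T.cluster w' :=
  fun _ hx => T.anc_trans' h hx

lemma not_isLeaf_of_two' {w : T.V} {a b : L} (ha : a ∈ T.cluster w)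
    (hb : b ∈ T.cluster w) (hab : a ≠ b) : ¬ T.isLeaf w := by
  rintro ⟨q, rfl⟩
  rw [T.cluster_leaf', Set.mem_singleton_iff] at ha
  rw [T.cluster_leaf', Set.mem_singleton_iff] at hb
  exact hab (ha.trans hb.symm)

lemma exists_child_over' {w : T.V} {a : L} (hw : ¬ T.isLeaf w)
    (ha : T.anc w (T.leaf a)) :
    ∃ c : T.V, T.parent c = w ∧ c ≠ w ∧ T.anc c (T.leaf a) :=
  T.exists_child_between' ha (fun h => hw ⟨a, h⟩)

lemma isLCA_of_children' {w u1 u2 : T.V} {x y : L} (h1 : T.parent u1 = w)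
    (h1' : u1 ≠ w) (h2 : T.parent u2 = w) (h2' : u2 ≠ w) (hne : u1 ≠ u2)
    (hx : T.anc u1 (T.leaf x)) (hy : T.anc u2 (T.leaf y)) : T.isLCA x y w := by
  have hw1 : T.anc w u1 := ⟨1, by simpa using h1⟩
  have hw2 : T.anc w u2 := ⟨1, by simpa using h2⟩
  refine ⟨T.anc_trans' hw1 hx, T.anc_trans' hw2 hy, ?_⟩
  intro u hux huy
  rcases T.anc_comparable' hux (T.anc_trans' hw1 hx) with h | h
  · exact h
  · by_cases he : u = w
    · subst he; exact T.anc_refl' _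
    · obtain ⟨c, hc, hc', hcu⟩ := T.exists_child_between' h he
      have e1 : c = u1 := T.child_unique' hc hc' h1 h1' (T.anc_trans' hcu hux) hx
      have e2 : c = u2 := T.child_unique' hc hc' h2 h2' (T.anc_trans' hcu huy) hy
      exact absurd (e1.symm.trans e2) hne

lemma isLCA_of_sibling' {v p : T.V} {x z : L} (hp : T.parent v = p) (hvp : v ≠ p)
    (hx : T.anc v (T.leaf x)) (hz : T.anc p (T.leaf z))
    (hzv : ¬ T.anc v (T.leaf z)) : T.isLCA x z p := by
  have hpv : T.anc p v := ⟨1, by simpa using hp⟩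
  refine ⟨T.anc_trans' hpv hx, hz, ?_⟩
  intro u hux huz
  rcases T.anc_comparable' hux (T.anc_trans' hpv hx) with h | h
  · exact h
  · rcases T.anc_comparable' hux hx with h2 | h2
    · by_cases he : u = p
      · subst he; exact T.anc_refl' _
      · obtain ⟨c, hc, hc', hcu⟩ := T.exists_child_between' h he
        have hcv : c = v :=
          T.child_unique' hc hc' hp hvp (T.anc_trans' hcu h2) (T.anc_refl' v)
        have hvz : T.anc v (T.leaf z) := hcv ▸ T.anc_trans' hcu huz
        exact absurd hvz hzv
    · exact absurd (T.anc_trans' h2 huz) hzv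

lemma exists_isLCA' (x y : L) : ∃ w : T.V, T.isLCA x y w := by
  classical
  have hex : ∃ n, T.anc (T.parent^[n] (T.leaf x)) (T.leaf y) := by
    obtain ⟨n, hn⟩ := T.reach (T.leaf x)
    exact ⟨n, by rw [hn]; exact T.reach _⟩
  refine ⟨T.parent^[Nat.find hex] (T.leaf x), ⟨Nat.find hex, rfl⟩,
    Nat.find_spec hex, ?_⟩
  intro u hux huy
  obtain ⟨m, hm⟩ := hux
  have hle : Nat.find hex ≤ m := Nat.find_min' hex (by rw [hm]; exact huy)
  exact ⟨m - Nat.find hex,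
    by rw [← Function.iterate_add_apply, Nat.sub_add_cancel hle, hm]⟩

lemma exists_min_cluster' (C : Set L) (x0 : L) :
    ∃ w : T.V, C ⊆ T.cluster w ∧ T.anc w (T.leaf x0) ∧
      ∀ w' : T.V, T.anc w' (T.leaf x0) → C ⊆ T.cluster w' → T.anc w' w := by
  classical
  have hex : ∃ n, C ⊆ T.cluster (T.parent^[n] (T.leaf x0)) := by
    obtain ⟨n, hn⟩ := T.reach (T.leaf x0)
    exact ⟨n, by rw [hn, T.cluster_root']; exact Set.subset_univ C⟩
  refine ⟨T.parent^[Nat.find hex] (T.leaf x0), Nat.find_spec hex,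
    ⟨Nat.find hex, rfl⟩, ?_⟩
  intro w' hw' hsub
  obtain ⟨m, hm⟩ := hw'
  have hle : Nat.find hex ≤ m := Nat.find_min' hex (by rw [hm]; exact hsub)
  exact ⟨m - Nat.find hex,
    by rw [← Function.iterate_add_apply, Nat.sub_add_cancel hle, hm]⟩

end PhyloTree

/-- Let `δ` be a symbolic ultrametric with (unique)
discriminating least-resolved tree `(T_δ,t_δ)`.  A tree `T` admits a labeling
`t` such that `(T,t)` explains `δ` iff `T` refines `T_δ`; in that case the
labeling (on inner vertices) is uniquely determined by `T` and `δ`. -/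
theorem statement5 {L M : Type} (δ : L → L → M) (Tδ : PhyloTree L) (tδ : Tδ.V → M)
    (hexp : Tδ.ExplainsDelta tδ δ) (hdisc : Tδ.Discriminating tδ) :
    ∀ T : PhyloTree L,
      ((∃ t : T.V → M, T.ExplainsDelta t δ) ↔ Tδ.clusters ⊆ T.clusters) ∧
      (∀ t t' : T.V → M, T.ExplainsDelta t δ → T.ExplainsDelta t' δ →
        ∀ v : T.V, ¬ T.isLeaf v → t v = t' v) := by
  classical
  intro T
  constructor
  · constructor
    · -- (T,t) explains δ  ⇒  T refines T_δ
      rintro ⟨t, ht⟩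
      rintro C ⟨v, rfl⟩
      have main : ∀ n : ℕ, ∀ v : Tδ.V, Tδ.parent^[n] v = Tδ.root →
          ∃ w : T.V, T.cluster w = Tδ.cluster v := by
        intro n
        induction n using Nat.strong_induction_on with
        | _ n ih =>
        intro v hn
        by_cases hleaf : Tδ.isLeaf v
        · obtain ⟨x, rfl⟩ := hleaf
          exact ⟨T.leaf x, by rw [T.cluster_leaf', Tδ.cluster_leaf']⟩
        by_cases hroot : v = Tδ.root
        · exact ⟨T.root, by rw [T.cluster_root', hroot, Tδ.cluster_root']⟩
        -- v is inner and not the root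
        set p := Tδ.parent v with hp
        have hpnev : Tδ.parent v ≠ v := Tδ.parent_ne_of_ne_root' hroot
        have hvp : v ≠ p := fun h => hpnev (hp.symm.trans h.symm)
        have hm : tδ v ≠ tδ p := hdisc v ⟨hpnev, hleaf⟩
        have hpv : Tδ.anc p v := ⟨1, by rw [Function.iterate_one, hp]⟩
        have hn0 : n ≠ 0 := by rintro rfl; exact hroot (by simpa using hn)
        have hppath : Tδ.parent^[n - 1] p = Tδ.root := by
          have h6 : Tδ.parent^[n - 1 + 1] v = Tδ.root := by
            rw [Nat.sub_add_cancel (Nat.one_le_iff_ne_zero.mpr hn0)]; exact hn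
          rw [Function.iterate_succ_apply] at h6
          rw [hp]; exact h6
        obtain ⟨wp, hwp⟩ := ih (n - 1) (by omega) p hppath
        obtain ⟨c, c', hcc', hc, hc', hcv, hc'v⟩ := Tδ.phylo v hleaf
        obtain ⟨xc, hxc⟩ := Tδ.exists_leaf_below' c
        obtain ⟨xc', hxc'⟩ := Tδ.exists_leaf_below' c'
        have hxcv : xc ∈ Tδ.cluster v := Tδ.anc_trans' ⟨1, by simpa using hc⟩ hxc
        have hxc'v : xc' ∈ Tδ.cluster v := Tδ.anc_trans' ⟨1, by simpa using hc'⟩ hxc'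
        have hxcne : xc ≠ xc' := by
          rintro rfl; exact hcc' (Tδ.child_unique' hc hcv hc' hc'v hxc hxc')
        obtain ⟨w, hw1, hw2, hw3⟩ := T.exists_min_cluster' (Tδ.cluster v) xc
        refine ⟨w, Set.Subset.antisymm ?_ hw1⟩
        intro z hz
        by_contra hzv
        have hwleaf : ¬ T.isLeaf w := T.not_isLeaf_of_two' (hw1 hxcv) (hw1 hxc'v) hxcne
        have hblock : ∀ u' : T.V, T.parent u' = w → u' ≠ w →
            ¬ Tδ.cluster v ⊆ T.cluster u' := by
          intro u' hpu' hneu' hsubu'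
          have h1 : T.anc u' (T.leaf xc) := hsubu' hxcv
          have h2 : T.anc u' w := hw3 u' h1 hsubu'
          exact hneu'
            (T.anc_antisymm' (⟨1, by simpa using hpu'⟩ : T.anc w u') h2).symm
        obtain ⟨uz, hpuz, huzw, huzz⟩ := T.exists_child_over' hwleaf hz
        obtain ⟨x, hxv, hxuz⟩ := Set.not_subset.mp (hblock uz hpuz huzw)
        obtain ⟨ux, hpux, huxw, huxx⟩ := T.exists_child_over' hwleaf (hw1 hxv)
        have huxuz : ux ≠ uz := fun h => hxuz (h ▸ huxx)
        have hxz : x ≠ z := fun h => hzv (h ▸ hxv)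
        have htw : t w = tδ p := by
          have hlcaT : T.isLCA x z w :=
            T.isLCA_of_children' hpux huxw hpuz huzw huxuz huxx huzz
          have e1 : t w = δ x z := ht x z hxz w hlcaT
          have hzw_p : z ∈ Tδ.cluster p := by
            have hwpxc : T.anc wp (T.leaf xc) := by
              have h4 : xc ∈ T.cluster wp := by
                rw [hwp]; exact Tδ.cluster_mono' hpv hxcv
              exact h4
            have hsubp : Tδ.cluster v ⊆ T.cluster wp := by
              rw [hwp]; exact Tδ.cluster_mono' hpv
            have hancwp : T.anc wp w := hw3 wp hwpxc hsubp
            have h5 : z ∈ T.cluster wp := T.cluster_mono' hancwp hz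
            rw [hwp] at h5; exact h5
          have hlcaδ : Tδ.isLCA x z p := Tδ.isLCA_of_sibling' hp.symm hvp hxv hzw_p hzv
          have e2 : tδ p = δ x z := hexp x z hxz p hlcaδ
          rw [e1, ← e2]
        have hTcross : ∀ a b : L, a ∈ Tδ.cluster v → b ∈ Tδ.cluster v →
            ∀ u1 : T.V, T.parent u1 = w → u1 ≠ w → T.anc u1 (T.leaf a) →
            ¬ T.anc u1 (T.leaf b) → δ a b = tδ p := by
          intro a b hav hbv u1 hpu1 hu1w ha1 hb1
          obtain ⟨u2, hpu2, hu2w, hu2b⟩ := T.exists_child_over' hwleaf (hw1 hbv)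
          have hne12 : u1 ≠ u2 := fun h => hb1 (h ▸ hu2b)
          have hab : a ≠ b := fun h => hb1 (h ▸ ha1)
          have e3 := ht a b hab w (T.isLCA_of_children' hpu1 hu1w hpu2 hu2w hne12 ha1 hu2b)
          rw [← e3]; exact htw
        have hDcross : ∀ a b : L, ∀ ca cb : Tδ.V, Tδ.parent ca = v → ca ≠ v →
            Tδ.parent cb = v → cb ≠ v → ca ≠ cb → Tδ.anc ca (Tδ.leaf a) →
            Tδ.anc cb (Tδ.leaf b) → δ a b = tδ v := by
          intro a b ca cb hca hcav hcb hcbv hcacb haa hbb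
          have hab : a ≠ b := by
            rintro rfl; exact hcacb (Tδ.child_unique' hca hcav hcb hcbv haa hbb)
          exact (hexp a b hab v
            (Tδ.isLCA_of_children' hca hcav hcb hcbv hcacb haa hbb)).symm
        obtain ⟨u1, hpu1, hu1w, hu1xc⟩ := T.exists_child_over' hwleaf (hw1 hxcv)
        by_cases hx' : T.anc u1 (T.leaf xc')
        · obtain ⟨b, hbv, hbu1⟩ := Set.not_subset.mp (hblock u1 hpu1 hu1w)
          obtain ⟨cb, hcb, hcbv, hcbb⟩ := Tδ.exists_child_over' hleaf hbv
          by_cases hcbc : cb = c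
          · have e1 : δ xc' b = tδ v :=
              hDcross xc' b c' cb hc' hc'v hcb hcbv
                (by rw [hcbc]; exact hcc'.symm) hxc' hcbb
            have e2 : δ xc' b = tδ p := hTcross xc' b hxc'v hbv u1 hpu1 hu1w hx' hbu1
            exact hm (e1.symm.trans e2)
          · have e1 : δ xc b = tδ v :=
              hDcross xc b c cb hc hcv hcb hcbv (fun h => hcbc h.symm) hxc hcbb
            have e2 : δ xc b = tδ p := hTcross xc b hxcv hbv u1 hpu1 hu1w hu1xc hbu1
            exact hm (e1.symm.trans e2)
        · have e1 : δ xc xc' = tδ v := hDcross xc xc' c c' hc hcv hc' hc'v hcc' hxc hxc'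
          have e2 : δ xc xc' = tδ p := hTcross xc xc' hxcv hxc'v u1 hpu1 hu1w hu1xc hx'
          exact hm (e1.symm.trans e2)
      obtain ⟨nv, hnv⟩ := Tδ.reach v
      obtain ⟨w, hw⟩ := main nv v hnv
      exact ⟨w, hw⟩
    · -- refinement ⇒ labeling exists
      intro hsub
      choose xw hxw using T.exists_leaf_below'
      choose vt h1 h2 h3 using fun w => Tδ.exists_min_cluster' (T.cluster w) (xw w)
      refine ⟨fun w => tδ (vt w), ?_⟩
      intro x y hxy w hw
      obtain ⟨u, hu⟩ := Tδ.exists_isLCA' x y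
      have hbx : T.anc w (T.leaf x) := hw.1
      have hby : T.anc w (T.leaf y) := hw.2.1
      obtain ⟨w', hw'⟩ := hsub ⟨u, rfl⟩
      have hxw' : T.anc w' (T.leaf x) := by
        have h4 : x ∈ T.cluster w' := by rw [hw']; exact hu.1
        exact h4
      have hyw' : T.anc w' (T.leaf y) := by
        have h4 : y ∈ T.cluster w' := by rw [hw']; exact hu.2.1
        exact h4
      have hww' : T.anc w' w := hw.2.2 w' hxw' hyw'
      have hb : T.cluster w ⊆ Tδ.cluster u := by
        rw [← hw']; exact T.cluster_mono' hww'
      have ha : Tδ.anc (vt w) u := hu.2.2 (vt w) (h1 w hbx) (h1 w hby)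
      have hc : Tδ.anc u (vt w) := h3 w u (hb (hxw w)) hb
      have he : vt w = u := Tδ.anc_antisymm' ha hc
      show tδ (vt w) = δ x y
      rw [he]
      exact hexp x y hxy u hu
  · -- uniqueness of the labeling on inner vertices
    intro t t' ht ht' v hv
    obtain ⟨u, u', hne, hu, hu', huv, hu'v⟩ := T.phylo v hv
    obtain ⟨x, hx⟩ := T.exists_leaf_below' u
    obtain ⟨y, hy⟩ := T.exists_leaf_below' u'
    have hxy : x ≠ y := by
      rintro rfl; exact hne (T.child_unique' hu huv hu' hu'v hx hy)
    have hlca : T.isLCA x y v := T.isLCA_of_children' hu huv hu' hu'v hne hx hy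
    rw [ht x y hxy v hlca, ht' x y hxy v hlca]
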